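/- Algebraic trace inequality underlying Lemma 4.2: Let S be a symmetric trace-free endomorphism of an (n-1)-dimensional real inner product space, and let v be a unit vector. Then Σ_{k} (⟨Sv,v⟩⟨Se_k,e_k⟩ - ⟨Sv,e_k⟩²) ≥ -((n-2)/(n-1))·|S|², where the sum is over an orthonormal basis (e_k), and |S|² is the Hilbert–Schmidt norm squared. -/
import Mathlib

open Finset

private lemma sum_sep' {m : ℕ} (f g : Fin m → ℝ) :
    ∑ i, ∑ j, f i * g j = (∑ i, f i) * (∑ i, g i) :=
  (Finset.sum_mul_sum _ _ _ _).symm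

private lemma sum_lin {m : ℕ} (f g : Fin m → ℝ) (b c : ℝ) :
    ∑ i, (b * f i + c * g i) = b * (∑ i, f i) + c * (∑ i, g i) := by
  rw [Finset.sum_add_distrib, Finset.mul_sum, Finset.mul_sum]

private lemma sum_lin3 {m : ℕ} (f g h : Fin m → ℝ) (b c d : ℝ) :
    ∑ i, (b * f i + c * g i + d * h i)
      = b * (∑ i, f i) + c * (∑ i, g i) + d * (∑ i, h i) := by
  rw [Finset.sum_add_distrib, Finset.sum_add_distrib, Finset.mul_sum, Finset.mul_sum,
    Finset.mul_sum]

private lemma prod_sum' {m : ℕ} (F : Fin m × Fin m → ℝ) :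
    ∑ q : Fin m × Fin m, F q = ∑ i, ∑ j, F (i, j) := by
  rw [← Finset.univ_product_univ, Finset.sum_product]

/-- algebraic trace inequality: for a symmetric trace-free operator `S`
on an `(n-1)`-dimensional real inner product space and a unit vector `v`,
`Σ_k (⟨Sv,v⟩⟨Se_k,e_k⟩ - ⟨Sv,e_k⟩²) ≥ -((n-2)/(n-1))·|S|²`. -/
theorem trace_inequality_minimal
    (n : ℕ) (hn : 2 ≤ n)
    (S : Matrix (Fin (n-1)) (Fin (n-1)) ℝ) (hS : S.IsSymm) (htr : S.trace = 0)
    (v : Fin (n-1) → ℝ) (hv : ∑ i, (v i)^2 = 1) :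
    -(((n : ℝ) - 2)/((n : ℝ) - 1)) * (∑ i, ∑ j, (S i j)^2) ≤
      ∑ k, ((∑ i, S.mulVec v i * v i) * S k k - (S.mulVec v k)^2) := by
  have hsymm : ∀ i j, S j i = S i j := fun i j => hS.apply i j
  set u : Fin (n-1) → ℝ := S.mulVec v with hu0
  have hu : ∀ i, u i = ∑ j, S i j * v j := fun i => by
    simp [hu0, Matrix.mulVec, dotProduct]
  set a : ℝ := ∑ i, u i * v i with ha0
  set U : ℝ := ∑ i, u i ^ 2 with hU0
  set T : ℝ := ∑ i, ∑ j, S i j ^ 2 with hT0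
  have htr' : ∑ i, S i i = 0 := by simpa [Matrix.trace, Matrix.diag] using htr
  have hRHS : ∑ k, ((∑ i, u i * v i) * S k k - u k ^ 2) = -U := by
    rw [Finset.sum_sub_distrib, ← Finset.mul_sum, htr', mul_zero, zero_sub, hU0]
  rw [hRHS]
  -- trivial case n = 2
  rcases eq_or_lt_of_le hn with hn2 | hn3
  · -- n = 2 : Fin (n-1) is a subsingleton
    subst hn2
    haveI : Subsingleton (Fin (2-1)) := ⟨fun i j => Fin.ext (by omega)⟩
    have i0 : Fin (2-1) := ⟨0, by norm_num⟩
    have hU : U = 0 := by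
      rw [hU0, Fintype.sum_subsingleton _ i0, hu, Fintype.sum_subsingleton _ i0]
      have : S i0 i0 = 0 := by
        have := htr'
        rwa [Fintype.sum_subsingleton _ i0] at this
      rw [this]; ring
    rw [hU]
    norm_num
  -- main case n ≥ 3
  have hn1 : (1:ℕ) ≤ n := by omega
  have hcard : ∑ _i : Fin (n-1), (1:ℝ) = (n:ℝ) - 1 := by
    rw [Finset.sum_const, Finset.card_univ, Fintype.card_fin, nsmul_eq_mul, mul_one,
      Nat.cast_sub hn1, Nat.cast_one]
  have hc3 : (3:ℝ) ≤ (n:ℝ) := by exact_mod_cast hn3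
  -- column sums via symmetry
  have hcol : ∀ j, ∑ i, S i j * v i = u j := fun j => by
    rw [hu j]
    exact Finset.sum_congr rfl fun i _ => by rw [hsymm j i]
  have hSfg : ∀ (f g : Fin (n-1) → ℝ),
      ∑ i, ∑ j, S i j * (f i * g j) = ∑ i, f i * (∑ j, S i j * g j) := by
    intro f g
    refine Finset.sum_congr rfl fun i _ => ?_
    rw [Finset.mul_sum]
    exact Finset.sum_congr rfl fun j _ => by ring
  have hvR : ∑ i, v i * (∑ j, S i j * u j) = U := by
    calc ∑ i, v i * ∑ j, S i j * u j = ∑ i, ∑ j, (S i j * v i) * u j := by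
          refine Finset.sum_congr rfl fun i _ => ?_
          rw [Finset.mul_sum]
          exact Finset.sum_congr rfl fun j _ => by ring
      _ = ∑ j, ∑ i, (S i j * v i) * u j := Finset.sum_comm
      _ = ∑ j, (∑ i, S i j * v i) * u j :=
          Finset.sum_congr rfl fun j _ => (Finset.sum_mul _ _ _).symm
      _ = ∑ j, u j * u j := Finset.sum_congr rfl fun j _ => by rw [hcol]
      _ = U := by rw [hU0]; exact Finset.sum_congr rfl fun j _ => (pow_two (u j)).symm
  have hSvv : ∑ i, v i * (∑ j, S i j * v j) = a := by
    rw [ha0]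
    exact Finset.sum_congr rfl fun i _ => by rw [← hu i]; ring
  -- norm squared of M = PSP
  have hM2 : ∑ i, ∑ j, (S i j - v i * u j - u i * v j + a * (v i * v j))^2
      = T - 2*U + a^2 := by
    have expand : ∀ i j, (S i j - v i * u j - u i * v j + a * (v i * v j))^2 =
        S i j^2 + S i j * ((-2 * v i) * u j) + S i j * ((-2 * u i + 2*a*v i) * v j)
        + (v i^2) * (u j^2) + ((u i - a * v i)^2) * (v j^2)
        + (2 * v i * (u i - a * v i)) * (u j * v j) := fun i j => by ring
    have e1 : ∑ i, ∑ j, S i j * ((-2 * v i) * u j) = -2 * U := by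
      have : ∀ i j, S i j * ((-2 * v i) * u j) = S i j * ((-2 * v i) * u j) := fun _ _ => rfl
      calc ∑ i, ∑ j, S i j * ((-2 * v i) * u j)
          = ∑ i, (-2 * v i) * (∑ j, S i j * u j) := hSfg _ _
        _ = -2 * ∑ i, v i * (∑ j, S i j * u j) := by
            rw [Finset.mul_sum]
            exact Finset.sum_congr rfl fun i _ => by ring
        _ = -2 * U := by rw [hvR]
    have e2 : ∑ i, ∑ j, S i j * ((-2 * u i + 2*a*v i) * v j) = -2*U + 2*a*a := by
      calc ∑ i, ∑ j, S i j * ((-2 * u i + 2*a*v i) * v j)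
          = ∑ i, (-2 * u i + 2*a*v i) * (∑ j, S i j * v j) := hSfg _ _
        _ = ∑ i, ((-2) * (u i ^ 2) + (2*a) * (u i * v i)) := by
            refine Finset.sum_congr rfl fun i _ => ?_
            rw [← hu i]; ring
        _ = (-2) * (∑ i, u i ^ 2) + (2*a) * (∑ i, u i * v i) := sum_lin _ _ _ _
        _ = -2*U + 2*a*a := by rw [← hU0, ← ha0]
    have e3 : ∑ i, ∑ j, (v i^2) * (u j^2) = U := by
      rw [sum_sep', hv, ← hU0, one_mul]
    have e4 : ∑ i, ∑ j, ((u i - a * v i)^2) * (v j^2) = U - 2*a*a + a^2 := by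
      rw [sum_sep', hv, mul_one]
      calc ∑ i, (u i - a * v i)^2
          = ∑ i, ((1:ℝ) * (u i ^ 2) + (-2*a)*(u i * v i) + a^2 * (v i ^ 2)) :=
            Finset.sum_congr rfl fun i _ => by ring
        _ = (1:ℝ) * (∑ i, u i ^2) + (-2*a)*(∑ i, u i * v i) + a^2 * (∑ i, v i ^2) :=
            sum_lin3 _ _ _ _ _ _
        _ = U - 2*a*a + a^2 := by rw [← hU0, ← ha0, hv]; ring
    have e5 : ∑ i, ∑ j, (2 * v i * (u i - a * v i)) * (u j * v j) = 0 := by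
      rw [sum_sep', ← ha0]
      have : ∑ i, 2 * v i * (u i - a * v i) = 0 := by
        calc ∑ i, 2 * v i * (u i - a * v i)
            = ∑ i, ((2:ℝ)*(u i * v i) + (-2*a)*(v i ^ 2)) :=
              Finset.sum_congr rfl fun i _ => by ring
          _ = (2:ℝ)*(∑ i, u i * v i) + (-2*a)*(∑ i, v i ^ 2) := sum_lin _ _ _ _
          _ = 0 := by rw [← ha0, hv]; ring
      rw [this, zero_mul]
    calc ∑ i, ∑ j, (S i j - v i * u j - u i * v j + a * (v i * v j))^2
        = ∑ i, ∑ j, (S i j^2 + S i j * ((-2 * v i) * u j)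
            + S i j * ((-2 * u i + 2*a*v i) * v j)
            + (v i^2) * (u j^2) + ((u i - a * v i)^2) * (v j^2)
            + (2 * v i * (u i - a * v i)) * (u j * v j)) := by
          exact Finset.sum_congr rfl fun i _ => Finset.sum_congr rfl fun j _ => expand i j
      _ = T - 2*U + a^2 := by
          simp only [Finset.sum_add_distrib]
          rw [e1, e2, e3, e4, e5, ← hT0]
          ring
  -- trace of M
  have htrM : ∑ i, (S i i - v i * u i - u i * v i + a * (v i * v i)) = -a := by
    calc ∑ i, (S i i - v i * u i - u i * v i + a * (v i * v i))
        = ∑ i, ((1:ℝ) * (S i i) + (-2)*(u i * v i) + a * (v i ^ 2)) :=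
          Finset.sum_congr rfl fun i _ => by ring
      _ = (1:ℝ) * (∑ i, S i i) + (-2)*(∑ i, u i * v i) + a * (∑ i, v i ^2) :=
          sum_lin3 _ _ _ _ _ _
      _ = -a := by rw [htr', ← ha0, hv]; ring
  -- inner product with P
  have hXP : ∑ i, ∑ j, (S i j - v i * u j - u i * v j + a * (v i * v j))
      * ((if i = j then (1:ℝ) else 0) - v i * v j) = -a := by
    have split : ∀ i j, (S i j - v i * u j - u i * v j + a * (v i * v j))
        * ((if i = j then (1:ℝ) else 0) - v i * v j)
        = (if i = j then (S i j - v i * u j - u i * v j + a * (v i * v j)) else 0)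
          - (S i j * (v i * v j) - (v i^2) * (u j * v j) - (u i * v i) * (v j^2)
            + (a * v i^2) * (v j^2)) := by
      intro i j
      by_cases h : i = j <;> simp [h] <;> ring
    calc ∑ i, ∑ j, (S i j - v i * u j - u i * v j + a * (v i * v j))
          * ((if i = j then (1:ℝ) else 0) - v i * v j)
        = (∑ i, ∑ j, (if i = j then (S i j - v i * u j - u i * v j + a * (v i * v j)) else 0))
          - (∑ i, ∑ j, (S i j * (v i * v j) - (v i^2) * (u j * v j) - (u i * v i) * (v j^2)
            + (a * v i^2) * (v j^2))) := by
          simp only [split, Finset.sum_sub_distrib]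
      _ = -a := by
          have d1 : ∑ i, ∑ j, (if i = j then (S i j - v i * u j - u i * v j + a * (v i * v j)) else 0)
              = ∑ i, (S i i - v i * u i - u i * v i + a * (v i * v i)) := by
            refine Finset.sum_congr rfl fun i _ => ?_
            rw [Finset.sum_ite_eq _ i (fun j => S i j - v i * u j - u i * v j + a * (v i * v j))]
            simp
          have d2 : ∑ i, ∑ j, (S i j * (v i * v j) - (v i^2) * (u j * v j) - (u i * v i) * (v j^2)
              + (a * v i^2) * (v j^2)) = 0 := by
            simp only [Finset.sum_sub_distrib, Finset.sum_add_distrib]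
            rw [hSfg v v, hSvv, sum_sep', sum_sep', sum_sep', ← ha0, hv]
            have : ∑ i, a * v i ^2 = a := by rw [← Finset.mul_sum, hv, mul_one]
            rw [this]
            ring
          rw [d1, d2, htrM]
          ring
  -- norm squared of P
  have hP2 : ∑ i, ∑ j, ((if i = j then (1:ℝ) else 0) - v i * v j)^2 = (n:ℝ) - 2 := by
    have split : ∀ i j, ((if i = j then (1:ℝ) else 0) - v i * v j)^2
        = (if i = j then (1 - 2*(v i * v j)) else 0) + (v i^2) * (v j^2) := by
      intro i j
      by_cases h : i = j <;> simp [h] <;> ring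
    calc ∑ i, ∑ j, ((if i = j then (1:ℝ) else 0) - v i * v j)^2
        = (∑ i, ∑ j, (if i = j then (1 - 2*(v i * v j)) else 0))
          + ∑ i, ∑ j, (v i^2) * (v j^2) := by
          simp only [split, Finset.sum_add_distrib]
      _ = (∑ i, (1 - 2*(v i * v i))) + 1 := by
          rw [sum_sep', hv, one_mul]
          congr 1
          refine Finset.sum_congr rfl fun i _ => ?_
          rw [Finset.sum_ite_eq _ i (fun j => 1 - 2*(v i * v j))]
          simp
      _ = (n:ℝ) - 2 := by
          rw [Finset.sum_sub_distrib, hcard, ← Finset.mul_sum]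
          have : ∑ i, v i * v i = 1 := by
            rw [← hv]; exact Finset.sum_congr rfl fun i _ => (pow_two (v i)).symm
          rw [this]
          ring
  -- Cauchy–Schwarz on the product index
  have CS2 : a^2 ≤ (T - 2*U + a^2) * ((n:ℝ) - 2) := by
    have := Finset.sum_mul_sq_le_sq_mul_sq Finset.univ
      (fun q : Fin (n-1) × Fin (n-1) =>
        S q.1 q.2 - v q.1 * u q.2 - u q.1 * v q.2 + a * (v q.1 * v q.2))
      (fun q : Fin (n-1) × Fin (n-1) =>
        (if q.1 = q.2 then (1:ℝ) else 0) - v q.1 * v q.2)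
    rw [prod_sum', prod_sum', prod_sum'] at this
    simp only at this
    rw [hXP, hM2, hP2] at this
    calc a^2 = (-a)^2 := by ring
      _ ≤ (T - 2*U + a^2) * ((n:ℝ) - 2) := this
  -- Cauchy–Schwarz for a² ≤ U
  have CS1 : a^2 ≤ U := by
    have := Finset.sum_mul_sq_le_sq_mul_sq Finset.univ u v
    rw [← ha0, ← hU0, hv, mul_one] at this
    exact this
  -- conclude
  have hden : (0:ℝ) < (n:ℝ) - 1 := by linarith
  rw [neg_mul, neg_le_neg_iff, div_mul_eq_mul_div, le_div_iff₀ hden]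
  nlinarith [mul_nonneg (by linarith : (0:ℝ) ≤ (n:ℝ) - 3) (by linarith : (0:ℝ) ≤ U - a^2)]
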